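/- Let λ0 > 0, let ρ1 : [0,λ0] → [0,1) and ρ2 : [−λ0,0] → [0,1) be continuous, let ω = e^{2πi/3}, and define δ1(λ) = exp( (1/(2πi)) ∫_0^{λ0} ln(1−ρ1(s))/(s−λ) ds ) for λ ∈ ℂ∖[0,λ0] and δ4(λ) = exp( (1/(2πi)) ∫_0^{−λ0} ln(1−ρ2(s))/(s−λ) ds ) for λ ∈ ℂ∖[−λ0,0]. Set δ2(λ) = δ4(ωλ), δ3(λ) = δ1(ω²λ), δ5(λ) = δ1(ωλ), δ6(λ) = δ4(ω²λ), and define δ_{N1}(λ) = δ3(λ)·δ4(λ)²·δ5(λ)/(δ2(λ)·δ6(λ)) and δ_{N4}(λ) = δ1(λ)²·δ2(λ)·δ6(λ)/(δ3(λ)·δ5(λ)). Then |δ_{N1}(λ0)| = 1 and |δ_{N4}(−λ0)| = 1. -/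

import Mathlib

open MeasureTheory intervalIntegral

/-- `ω = e^{2πi/3}`, a primitive cube root of unity. -/
noncomputable def ω : ℂ := Complex.exp (2 * Real.pi * Complex.I / 3)

/-- `δ1(λ) = exp( (1/(2πi)) ∫_0^{λ0} ln(1 − ρ1(s))/(s − λ) ds )`. -/
noncomputable def δ1 (lam0 : ℝ) (ρ1 : ℝ → ℝ) (lam : ℂ) : ℂ :=
  Complex.exp ((1 / (2 * (Real.pi : ℂ) * Complex.I)) *
    ∫ s in (0:ℝ)..lam0, ((Real.log (1 - ρ1 s) : ℝ) : ℂ) / ((s : ℂ) - lam))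

/-- `δ4(λ) = exp( (1/(2πi)) ∫_0^{−λ0} ln(1 − ρ2(s))/(s − λ) ds )`. -/
noncomputable def δ4 (lam0 : ℝ) (ρ2 : ℝ → ℝ) (lam : ℂ) : ℂ :=
  Complex.exp ((1 / (2 * (Real.pi : ℂ) * Complex.I)) *
    ∫ s in (0:ℝ)..(-lam0), ((Real.log (1 - ρ2 s) : ℝ) : ℂ) / ((s : ℂ) - lam))

/-- `δ2(λ) = δ4(ωλ)`. -/
noncomputable def δ2 (lam0 : ℝ) (ρ2 : ℝ → ℝ) (lam : ℂ) : ℂ := δ4 lam0 ρ2 (ω * lam)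

/-- `δ3(λ) = δ1(ω²λ)`. -/
noncomputable def δ3 (lam0 : ℝ) (ρ1 : ℝ → ℝ) (lam : ℂ) : ℂ := δ1 lam0 ρ1 (ω ^ 2 * lam)

/-- `δ5(λ) = δ1(ωλ)`. -/
noncomputable def δ5 (lam0 : ℝ) (ρ1 : ℝ → ℝ) (lam : ℂ) : ℂ := δ1 lam0 ρ1 (ω * lam)

/-- `δ6(λ) = δ4(ω²λ)`. -/
noncomputable def δ6 (lam0 : ℝ) (ρ2 : ℝ → ℝ) (lam : ℂ) : ℂ := δ4 lam0 ρ2 (ω ^ 2 * lam)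

/-- `δ_{N1} = δ3·δ4²·δ5/(δ2·δ6)`. -/
noncomputable def δN1 (lam0 : ℝ) (ρ1 ρ2 : ℝ → ℝ) (lam : ℂ) : ℂ :=
  δ3 lam0 ρ1 lam * (δ4 lam0 ρ2 lam) ^ 2 * δ5 lam0 ρ1 lam /
    (δ2 lam0 ρ2 lam * δ6 lam0 ρ2 lam)

/-- `δ_{N4} = δ1²·δ2·δ6/(δ3·δ5)`. -/
noncomputable def δN4 (lam0 : ℝ) (ρ1 ρ2 : ℝ → ℝ) (lam : ℂ) : ℂ :=
  (δ1 lam0 ρ1 lam) ^ 2 * δ2 lam0 ρ2 lam * δ6 lam0 ρ2 lam /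
    (δ3 lam0 ρ1 lam * δ5 lam0 ρ1 lam)


lemma conj_omega : (starRingEnd ℂ) ω = ω ^ 2 := by
  unfold ω
  rw [← Complex.exp_conj, ← Complex.exp_nat_mul]
  have : ((starRingEnd ℂ) (2 * Real.pi * Complex.I / 3)) =
      (2 : ℕ) * (2 * Real.pi * Complex.I / 3) - 2 * Real.pi * Complex.I := by
    simp [map_div₀, Complex.conj_I, map_ofNat]
    ring
  rw [this, Complex.exp_sub, Complex.exp_two_pi_mul_I, div_one]

noncomputable abbrev cst : ℂ := 1 / (2 * (Real.pi : ℂ) * Complex.I)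

lemma conj_cst : (starRingEnd ℂ) cst = -cst := by
  simp [cst, map_div₀, Complex.conj_I, map_ofNat]

lemma my_integral_conj (f : ℝ → ℂ) (a b : ℝ) :
    (∫ s in a..b, (starRingEnd ℂ) (f s)) = (starRingEnd ℂ) (∫ s in a..b, f s) := by
  simp [intervalIntegral, integral_conj]

lemma lemA (g : ℝ → ℝ) (a : ℝ) (lam : ℂ) :
    ‖Complex.exp (cst * ∫ s in (0:ℝ)..a, ((g s : ℝ) : ℂ) / ((s:ℂ) - (starRingEnd ℂ) lam))‖ *
    ‖Complex.exp (cst * ∫ s in (0:ℝ)..a, ((g s : ℝ) : ℂ) / ((s:ℂ) - lam))‖ = 1 := by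
  have hI : (∫ s in (0:ℝ)..a, ((g s : ℝ) : ℂ) / ((s:ℂ) - (starRingEnd ℂ) lam)) =
      (starRingEnd ℂ) (∫ s in (0:ℝ)..a, ((g s : ℝ) : ℂ) / ((s:ℂ) - lam)) := by
    rw [← my_integral_conj]
    congr 1 with s
    simp [map_div₀, Complex.conj_ofReal]
  rw [hI, Complex.norm_exp, Complex.norm_exp, ← Real.exp_add]
  set I := ∫ s in (0:ℝ)..a, ((g s : ℝ) : ℂ) / ((s:ℂ) - lam)
  have : cst * (starRingEnd ℂ) I = (starRingEnd ℂ) (-(cst * I)) := by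
    rw [map_neg, map_mul, conj_cst]; ring
  rw [this, Complex.conj_re, Complex.neg_re]
  simp

lemma lemB (g : ℝ → ℝ) (a x : ℝ) :
    ‖Complex.exp (cst * ∫ s in (0:ℝ)..a, ((g s : ℝ) : ℂ) / ((s:ℂ) - (x:ℂ)))‖ = 1 := by
  have hI : (∫ s in (0:ℝ)..a, ((g s : ℝ) : ℂ) / ((s:ℂ) - (x:ℂ))) =
      ((∫ s in (0:ℝ)..a, g s / (s - x) : ℝ) : ℂ) := by
    rw [← intervalIntegral.integral_ofReal]
    congr 1 with s
    push_cast
    ring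
  rw [hI, Complex.norm_exp]
  have : (cst * ((∫ s in (0:ℝ)..a, g s / (s - x) : ℝ) : ℂ)).re = 0 := by
    simp [cst, Complex.div_re, Complex.mul_re]
  rw [this, Real.exp_zero]

/-- `|δ_{N1}(λ0)| = 1` and `|δ_{N4}(−λ0)| = 1`. -/
theorem deltaN1_deltaN4_unit_modulus
    (lam0 : ℝ) (hlam0 : 0 < lam0) (ρ1 ρ2 : ℝ → ℝ)
    (hρ1c : ContinuousOn ρ1 (Set.Icc 0 lam0))
    (hρ2c : ContinuousOn ρ2 (Set.Icc (-lam0) 0))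
    (hρ1 : ∀ s ∈ Set.Icc (0:ℝ) lam0, ρ1 s ∈ Set.Ico (0:ℝ) 1)
    (hρ2 : ∀ s ∈ Set.Icc (-lam0) (0:ℝ), ρ2 s ∈ Set.Ico (0:ℝ) 1) :
    ‖δN1 lam0 ρ1 ρ2 (lam0 : ℂ)‖ = 1 ∧
    ‖δN4 lam0 ρ1 ρ2 (-(lam0 : ℂ))‖ = 1 := by
  have hco1 : (starRingEnd ℂ) (ω * (lam0:ℂ)) = ω ^ 2 * (lam0:ℂ) := by
    rw [map_mul, conj_omega, Complex.conj_ofReal]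
  have hco2 : (starRingEnd ℂ) (ω * (-(lam0:ℂ))) = ω ^ 2 * (-(lam0:ℂ)) := by
    rw [map_mul, conj_omega, map_neg, Complex.conj_ofReal]
  have h35 : ‖δ3 lam0 ρ1 (lam0:ℂ)‖ * ‖δ5 lam0 ρ1 (lam0:ℂ)‖ = 1 := by
    have h := lemA (fun s => Real.log (1 - ρ1 s)) lam0 (ω * (lam0:ℂ))
    rw [hco1] at h; exact h
  have h26 : ‖δ6 lam0 ρ2 (lam0:ℂ)‖ * ‖δ2 lam0 ρ2 (lam0:ℂ)‖ = 1 := by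
    have h := lemA (fun s => Real.log (1 - ρ2 s)) (-lam0) (ω * (lam0:ℂ))
    rw [hco1] at h; exact h
  have h4 : ‖δ4 lam0 ρ2 (lam0:ℂ)‖ = 1 :=
    lemB (fun s => Real.log (1 - ρ2 s)) (-lam0) lam0
  have h35' : ‖δ3 lam0 ρ1 (-(lam0:ℂ))‖ * ‖δ5 lam0 ρ1 (-(lam0:ℂ))‖ = 1 := by
    have h := lemA (fun s => Real.log (1 - ρ1 s)) lam0 (ω * (-(lam0:ℂ)))
    rw [hco2] at h; exact h
  have h26' : ‖δ6 lam0 ρ2 (-(lam0:ℂ))‖ * ‖δ2 lam0 ρ2 (-(lam0:ℂ))‖ = 1 := by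
    have h := lemA (fun s => Real.log (1 - ρ2 s)) (-lam0) (ω * (-(lam0:ℂ)))
    rw [hco2] at h; exact h
  have h1 : ‖δ1 lam0 ρ1 (-(lam0:ℂ))‖ = 1 := by
    have h := lemB (fun s => Real.log (1 - ρ1 s)) lam0 (-lam0)
    rw [Complex.ofReal_neg] at h; exact h
  constructor
  · rw [δN1, norm_div, norm_mul, norm_mul, norm_mul, norm_pow, h4,
      show ‖δ2 lam0 ρ2 (lam0:ℂ)‖ * ‖δ6 lam0 ρ2 (lam0:ℂ)‖ = 1 by
        rw [mul_comm]; exact h26,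
      div_one, one_pow, mul_one]
    exact h35
  · rw [δN4, norm_div, norm_mul, norm_mul, norm_mul, norm_pow, h1, h35', div_one, one_pow, one_mul,
      mul_comm]
    exact h26'
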